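/- For every integer s ≥ 0, every integer r with 1 ≤ r ≤ (n−s)/2, every integer x with 2 ≤ x ≤ n, and every q ∈ [0,1], one has q_{r,s}(x,q) ≤ 1 − (1 − e^{−rx/(n−s)} − r²/(n−s−r)²)·h(x,q) + (s r x²/(n(n−s)))·h(x,q), where h(x,q) = 1 − (1−q)^{x−1}. -/

import Mathlib

open MeasureTheory Filter

noncomputable section

namespace SuperpositionKConn

/-- `h(x,q) = 1 - (1-q)^((x-1)_+)` (with `0^0 = 1`); here `x - 1` is truncated
natural subtraction, which realizes `(x-1)_+`. -/
def hfun (x : ℕ) (q : ℝ) : ℝ := 1 - (1 - q) ^ (x - 1)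

/-- The falling factorial `(x)_2 = x(x-1)` as a real number. -/
def fall2 (x : ℕ) : ℝ := (x : ℝ) * ((x : ℝ) - 1)

/-- `κ* = E[X h(X,Q)]`, where `μ` is the joint law of `(X,Q)`. -/
def kappaStar (μ : Measure (ℕ × ℝ)) : ℝ := ∫ p, (p.1 : ℝ) * hfun p.1 p.2 ∂μ

/-- `κ_n = E[X̃ h(X̃,Q)]`, where `X̃ = min(X,n)`. -/
def kappaN (μ : Measure (ℕ × ℝ)) (n : ℕ) : ℝ :=
  ∫ p, (min p.1 n : ℝ) * hfun (min p.1 n) p.2 ∂μ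

/-- `τ* = E[(X)_2 Q (1-Q)^(X-2)]`. -/
def tauStar (μ : Measure (ℕ × ℝ)) : ℝ :=
  ∫ p, fall2 p.1 * p.2 * (1 - p.2) ^ (p.1 - 2) ∂μ

/-- `τ_n = E[(X̃)_2 Q (1-Q)^(X̃-2)]`, where `X̃ = min(X,n)`. -/
def tauN (μ : Measure (ℕ × ℝ)) (n : ℕ) : ℝ :=
  ∫ p, fall2 (min p.1 n) * p.2 * (1 - p.2) ^ (min p.1 n - 2) ∂μ

/-- `α = E[Q · 1_{X ≥ 2}]`. -/
def alphaPar (μ : Measure (ℕ × ℝ)) : ℝ := ∫ p in {p : ℕ × ℝ | 2 ≤ p.1}, p.2 ∂μ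

/-- `λ*_{n,m,k} = ln n + (k-1) ln(m/n) - (m/n) κ*`. -/
def lamStar (μ : Measure (ℕ × ℝ)) (n m k : ℕ) : ℝ :=
  Real.log n + ((k : ℝ) - 1) * Real.log ((m : ℝ) / n) - ((m : ℝ) / n) * kappaStar μ

/-- `λ_{n,m,k} = ln n + (k-1) ln(m/n) - (m/n) κ_n`. -/
def lamN (μ : Measure (ℕ × ℝ)) (n m k : ℕ) : ℝ :=
  Real.log n + ((k : ℝ) - 1) * Real.log ((m : ℝ) / n) - ((m : ℝ) / n) * kappaN μ n

/-- `m = Θ(n ln n)`:  `m n / (n ln n)` is eventually bounded between two positive constants. -/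
def IsThetaNLogN (m : ℕ → ℕ) : Prop :=
  ∃ c₁ c₂ : ℝ, 0 < c₁ ∧ 0 < c₂ ∧ ∀ᶠ n : ℕ in atTop,
    c₁ * ((n : ℝ) * Real.log n) ≤ (m n : ℝ) ∧ (m n : ℝ) ≤ c₂ * ((n : ℝ) * Real.log n)

instance (n : ℕ) : MeasurableSpace (Equiv.Perm (Fin n)) := ⊤

/-- The uniform distribution on `[0,1]`. -/
def unif01 : Measure ℝ := volume.restrict (Set.Icc 0 1)

instance : IsProbabilityMeasure unif01 := ⟨by simp [unif01, Real.volume_Icc]⟩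

/-- The uniform distribution on permutations of `Fin n`. -/
def permMeasure (n : ℕ) : Measure (Equiv.Perm (Fin n)) :=
  (@PMF.uniformOfFintype (Equiv.Perm (Fin n)) _ ⟨1⟩).toMeasure

instance (n : ℕ) : IsProbabilityMeasure (permMeasure n) := by
  unfold permMeasure; infer_instance

/-- Sample space describing one community graph on the vertex set `Fin n`:
a sampled pair `(X,Q)`, a uniform random permutation used to pick the vertex set
(the community's vertex set is the image under the permutation of the first
`min X n` indices, hence a uniformly distributed subset of size `min X n`),
and i.i.d. uniform `[0,1]` labels on potential edges (an edge is present iff its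
label is `≤ Q`). -/
abbrev CommSpace (n : ℕ) : Type :=
  (ℕ × ℝ) × Equiv.Perm (Fin n) × (Sym2 (Fin n) → ℝ)

/-- The law of one community. -/
def commMeasure (μ : Measure (ℕ × ℝ)) (n : ℕ) : Measure (CommSpace n) :=
  μ.prod ((permMeasure n).prod (Measure.pi fun _ : Sym2 (Fin n) => unif01))

instance (μ : Measure (ℕ × ℝ)) [IsProbabilityMeasure μ] (n : ℕ) :
    IsProbabilityMeasure (commMeasure μ n) := by
  unfold commMeasure; infer_instance

/-- Vertex `v` belongs to the community's vertex set. -/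
def inComm {n : ℕ} (ω : CommSpace n) (v : Fin n) : Prop :=
  ((ω.2.1.symm v : Fin n) : ℕ) < min ω.1.1 n

/-- `u` and `v` are adjacent in the community graph. -/
def commAdj {n : ℕ} (ω : CommSpace n) (u v : Fin n) : Prop :=
  u ≠ v ∧ inComm ω u ∧ inComm ω v ∧ ω.2.2 s(u, v) ≤ ω.1.2

/-- The degree of `v` in the community graph (`0` if `v` is outside the community). -/
def commDeg {n : ℕ} (ω : CommSpace n) (v : Fin n) : ℕ :=
  Set.ncard {u | commAdj ω v u}

/-- Sample space for `m` independent communities on `Fin n`. -/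
abbrev Sample (n m : ℕ) : Type := Fin m → CommSpace n

/-- The joint law of the `m` i.i.d. communities. -/
def sampleMeasure (μ : Measure (ℕ × ℝ)) (n m : ℕ) : Measure (Sample n m) :=
  Measure.pi fun _ : Fin m => commMeasure μ n

instance (μ : Measure (ℕ × ℝ)) [IsProbabilityMeasure μ] (n m : ℕ) :
    IsProbabilityMeasure (sampleMeasure μ n m) := by
  unfold sampleMeasure; infer_instance

/-- The union graph `G_{[n,m]}`. -/
def unionGraph {n m : ℕ} (ω : Sample n m) : SimpleGraph (Fin n) where
  Adj u v := ∃ i, commAdj (ω i) u v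
  symm := by
    constructor
    intro u v h
    simp only [commAdj] at h ⊢
    obtain ⟨i, hne, hu, hv, he⟩ := h
    exact ⟨i, hne.symm, hv, hu, by rwa [Sym2.eq_swap] at he⟩
  loopless := by
    constructor
    intro v h
    simp only [commAdj] at h
    obtain ⟨i, hne, -⟩ := h
    exact hne rfl

/-- The degree of `v` in the union graph `G_{[n,m]}`. -/
def deg {n m : ℕ} (ω : Sample n m) (v : Fin n) : ℕ :=
  Set.ncard {u | (unionGraph ω).Adj v u}

/-- `N_t`: the number of vertices of degree `t` in `G_{[n,m]}`. -/
def Ndeg {n m : ℕ} (ω : Sample n m) (t : ℕ) : ℕ :=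
  Set.ncard {v | deg ω v = t}

/-- `S(v) = Σ_{i=1}^m d_i(v)`. -/
def Sdeg {n m : ℕ} (ω : Sample n m) (v : Fin n) : ℕ :=
  ∑ i, commDeg (ω i) v

/-- The event `D(v) = {S(v) = k-1 and d_i(v) ∈ {0,1} for all i}`. -/
def Devent {n m : ℕ} (k : ℕ) (ω : Sample n m) (v : Fin n) : Prop :=
  Sdeg ω v = k - 1 ∧ ∀ i, commDeg (ω i) v ≤ 1

/-- `N'_{k-1}`: the number of vertices with property `D`. -/
def Nprime {n m : ℕ} (k : ℕ) (ω : Sample n m) : ℕ :=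
  Set.ncard {v | Devent k ω v}

/-- A graph is vertex `k`-connected if the removal of any `k-1` vertices does not
disconnect it. -/
def VertexKConnected {V : Type*} [Fintype V] [DecidableEq V] (G : SimpleGraph V) (k : ℕ) : Prop :=
  ∀ S : Finset V, S.card ≤ k - 1 → (G.induce (↑(Sᶜ) : Set V)).Connected

/-- A graph is edge `k`-connected if the removal of any `k-1` edges does not
disconnect it. -/
def EdgeKConnected {V : Type*} (G : SimpleGraph V) (k : ℕ) : Prop :=
  ∀ E : Finset (Sym2 V), E.card ≤ k - 1 → (G.deleteEdges ↑E).Connected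

end SuperpositionKConn
namespace SuperpositionKConn

/-- Sample space for the Bernoulli graph `G_x` on a uniformly random subset `A_x`
of `{1,…,n}` of size `x`:  a uniform random permutation (whose image of the first
`x` indices is `A_x`) together with i.i.d. uniform `[0,1]` edge labels (an edge is
present iff its label is `≤ q`). -/
abbrev BernSpace (n : ℕ) : Type := Equiv.Perm (Fin n) × (Sym2 (Fin n) → ℝ)

/-- The law of the Bernoulli graph data. -/
def bernMeasure (n : ℕ) : Measure (BernSpace n) :=
  (permMeasure n).prod (Measure.pi fun _ : Sym2 (Fin n) => unif01)

instance (n : ℕ) : IsProbabilityMeasure (bernMeasure n) := by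
  unfold bernMeasure; infer_instance

/-- Adjacency of `u` and `v` in the Bernoulli random graph `G_x` with edge
probability `q`. -/
def bAdj (x : ℕ) (q : ℝ) {n : ℕ} (ω : BernSpace n) (u v : Fin n) : Prop :=
  u ≠ v ∧ ((ω.1.symm u : Fin n) : ℕ) < x ∧ ((ω.1.symm v : Fin n) : ℕ) < x ∧ ω.2 s(u, v) ≤ q

/-- `q_{r,s}(x,q)`: the probability that no edge of `G_x` joins a vertex of
`{s+1,…,s+r}` to a vertex of `{s+r+1,…,n}` (vertices of `Fin n` being labelled
`1,…,n`, so those ranges are `Set.Ico s (s+r)` and `Set.Ico (s+r) n` in `Fin n`). -/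
def qrs (n r s x : ℕ) (q : ℝ) : ℝ :=
  (bernMeasure n {ω : BernSpace n | ∀ u v : Fin n, (u : ℕ) ∈ Set.Ico s (s + r) →
      (v : ℕ) ∈ Set.Ico (s + r) n → ¬ bAdj x q ω u v}).toReal

/-- `q̂_{r,s} = E[q_{r,s}(min(X,n), Q)]`. -/
def qhat (μ : Measure (ℕ × ℝ)) (n r s : ℕ) : ℝ :=
  ∫ p, qrs n r s (min p.1 n) p.2 ∂μ

end SuperpositionKConn

namespace SuperpositionKConn

open Finset

-- ========== auxiliary ==========

instance (n : ℕ) : MeasurableSingletonClass (Equiv.Perm (Fin n)) :=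
  ⟨fun _ => MeasurableSpace.measurableSet_top⟩

lemma permMeasurableSet {n : ℕ} (S : Set (Equiv.Perm (Fin n))) : MeasurableSet S :=
  MeasurableSpace.measurableSet_top

lemma permMeasure_apply {n : ℕ} (S : Finset (Equiv.Perm (Fin n))) :
    permMeasure n ↑S = (S.card : ENNReal) * ((Nat.factorial n : ENNReal))⁻¹ := by
  rw [permMeasure, PMF.toMeasure_apply_finset]
  simp [PMF.uniformOfFintype_apply, Fintype.card_perm, Fintype.card_fin, mul_comm]

lemma unif01_Ioi {q : ℝ} (hq0 : 0 ≤ q) (hq1 : q ≤ 1) :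
    unif01 (Set.Ioi q) = ENNReal.ofReal (1 - q) := by
  rw [unif01, Measure.restrict_apply measurableSet_Ioi]
  have h : Set.Ioi q ∩ Set.Icc 0 1 = Set.Ioc q 1 := by
    ext z
    simp only [Set.mem_inter_iff, Set.mem_Ioi, Set.mem_Icc, Set.mem_Ioc]
    exact ⟨fun ⟨h1, _, h3⟩ => ⟨h1, h3⟩, fun ⟨h1, h2⟩ => ⟨h1, le_trans hq0 h1.le, h2⟩⟩
  rw [h, Real.volume_Ioc]

/-- the position window -/
def Tpos (n x : ℕ) : Finset (Fin n) := univ.filter (fun i : Fin n => (i : ℕ) < x)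

def permG (n x : ℕ) (U : Finset (Fin n)) : Finset (Equiv.Perm (Fin n)) :=
  univ.filter (fun π : Equiv.Perm (Fin n) => ∀ i ∈ Tpos n x, π i ∈ U)

def U1 (n s : ℕ) : Finset (Fin n) := univ.filter (fun u : Fin n => s ≤ (u : ℕ))
def U2 (n s r : ℕ) : Finset (Fin n) := univ.filter (fun u : Fin n => s + r ≤ (u : ℕ))
def U3 (n s r : ℕ) : Finset (Fin n) :=
  univ.filter (fun u : Fin n => s ≤ (u : ℕ) ∧ (u : ℕ) < s + r)

def Efin (n s r x : ℕ) : Finset (Equiv.Perm (Fin n)) :=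
  permG n x (U1 n s) \ (permG n x (U2 n s r) ∪ permG n x (U3 n s r))

lemma card_filter_val {n : ℕ} (p : ℕ → Prop) [DecidablePred p] :
    (univ.filter (fun i : Fin n => p (i : ℕ))).card = ((range n).filter p).card := by
  apply Finset.card_nbij (i := fun a : Fin n => (a : ℕ))
  · intro a ha
    simp only [Finset.mem_coe, mem_filter, mem_univ, true_and] at ha
    simp only [Finset.mem_coe, mem_filter, mem_range]
    exact ⟨a.2, ha⟩
  · exact fun a _ b _ h => Fin.val_injective h
  · intro b hb
    simp only [Finset.coe_filter, Set.mem_setOf_eq, mem_range] at hb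
    exact ⟨⟨b, hb.1⟩, by simp [hb.2], rfl⟩

lemma card_Tpos {n x : ℕ} (hxn : x ≤ n) : (Tpos n x).card = x := by
  rw [Tpos, card_filter_val (p := fun a => a < x)]
  have : (range n).filter (fun a => a < x) = range x := by
    ext a; simp only [mem_filter, mem_range]; omega
  rw [this, card_range]

lemma card_U1 {n s : ℕ} : (U1 n s).card = n - s := by
  rw [U1, card_filter_val]
  have : (range n).filter (fun a => s ≤ a) = Ico s n := by
    ext a; simp only [mem_filter, mem_range, mem_Ico]; omega
  rw [this, Nat.card_Ico]

lemma card_U2 {n s r : ℕ} : (U2 n s r).card = n - s - r := by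
  rw [U2, card_filter_val]
  have : (range n).filter (fun a => s + r ≤ a) = Ico (s + r) n := by
    ext a; simp only [mem_filter, mem_range, mem_Ico]; omega
  rw [this, Nat.card_Ico, Nat.sub_sub]

lemma card_U3 {n s r : ℕ} (h : s + r ≤ n) : (U3 n s r).card = r := by
  rw [U3, card_filter_val (p := fun a => s ≤ a ∧ a < s + r)]
  have : (range n).filter (fun a => s ≤ a ∧ a < s + r) = Ico s (s + r) := by
    ext a; simp only [mem_filter, mem_range, mem_Ico]; omega
  rw [this, Nat.card_Ico, Nat.add_sub_cancel_left]



variable {n : ℕ}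

lemma card_fix (T : Finset (Fin n)) :
    (univ.filter (fun π : Equiv.Perm (Fin n) => ∀ i ∈ T, π i = i)).card
      = Nat.factorial (n - T.card) := by
  classical
  have h1 : (univ.filter (fun π : Equiv.Perm (Fin n) => ∀ i ∈ T, π i = i)).card
      = Fintype.card {f : Equiv.Perm (Fin n) // ∀ a : Fin n, ¬ (a ∉ T) → f a = a} := by
    rw [Fintype.card_subtype]
    congr 1
    apply filter_congr
    intro π _
    constructor
    · intro h a ha; exact h a (not_not.mp ha)
    · intro h a ha; exact h a (not_not_intro ha)
  rw [h1, ← Fintype.card_congr (Equiv.Perm.subtypeEquivSubtypePerm (fun a : Fin n => a ∉ T)),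
    Fintype.card_perm, Fintype.card_subtype_compl, Fintype.card_fin, Fintype.card_coe]

lemma exists_ext (T : Finset (Fin n)) (g : {i // i ∈ T} → Fin n) (hg : Function.Injective g) :
    ∃ π : Equiv.Perm (Fin n), ∀ (i : Fin n) (h : i ∈ T), π i = g ⟨i, h⟩ := by
  classical
  set S : Finset (Fin n) := univ.image (fun i : {i // i ∈ T} => g i) with hS
  have hcard : S.card = T.card := by
    rw [hS, Finset.card_image_of_injective _ hg, card_univ, Fintype.card_coe]
  have hcc : (Tᶜ : Finset (Fin n)).card = (Sᶜ : Finset (Fin n)).card := by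
    rw [card_compl, card_compl, hcard]
  let e := Finset.equivOfCardEq hcc
  let f : Fin n → Fin n := fun a =>
    if h : a ∈ T then g ⟨a, h⟩ else (e ⟨a, by simpa using h⟩ : Fin n)
  have hfinj : Function.Injective f := by
    intro a b hab
    by_cases ha : a ∈ T <;> by_cases hb : b ∈ T <;> simp only [f, dif_pos, dif_neg, ha, hb] at hab
    · exact Subtype.ext_iff.mp (hg (by simpa using hab))
    · exfalso
      rw [dif_neg (fun h => h)] at hab
      have h1 : g ⟨a, ha⟩ ∈ S := mem_image.mpr ⟨⟨a, ha⟩, mem_univ _, rfl⟩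
      have h2 : ((e ⟨b, by simpa using hb⟩ : {i // i ∈ Sᶜ}) : Fin n) ∈ Sᶜ :=
        (e ⟨b, by simpa using hb⟩).2
      rw [← hab] at h2; exact (mem_compl.mp h2) h1
    · exfalso
      rw [dif_neg (fun h => h)] at hab
      have h1 : g ⟨b, hb⟩ ∈ S := mem_image.mpr ⟨⟨b, hb⟩, mem_univ _, rfl⟩
      have h2 : ((e ⟨a, by simpa using ha⟩ : {i // i ∈ Sᶜ}) : Fin n) ∈ Sᶜ :=
        (e ⟨a, by simpa using ha⟩).2
      rw [hab] at h2; exact (mem_compl.mp h2) h1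
    · have := e.injective (Subtype.ext hab)
      simpa using this
  refine ⟨Equiv.ofBijective f ((Finite.injective_iff_bijective).mp hfinj), ?_⟩
  intro i h
  simp [Equiv.ofBijective, f, dif_pos h]

lemma card_fiber (T : Finset (Fin n)) (g : {i // i ∈ T} → Fin n) (hg : Function.Injective g) :
    (univ.filter (fun π : Equiv.Perm (Fin n) => (fun i : {i // i ∈ T} => π i.1) = g)).card
      = Nat.factorial (n - T.card) := by
  classical
  obtain ⟨π₀, hπ₀⟩ := exists_ext T g hg
  rw [← card_fix T]
  apply Finset.card_bij' (fun π _ => π₀⁻¹ * π) (fun π _ => π₀ * π)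
  · intro π hπ
    simp only [mem_filter, mem_univ, true_and] at hπ ⊢
    intro i hi
    have h1 : π i = g ⟨i, hi⟩ := congrFun hπ ⟨i, hi⟩
    simp only [Equiv.Perm.mul_apply, h1, ← hπ₀ i hi, Equiv.Perm.inv_def, Equiv.symm_apply_apply]
  · intro π hπ
    simp only [mem_filter, mem_univ, true_and] at hπ ⊢
    funext i
    simp only [Equiv.Perm.mul_apply, hπ i.1 i.2, hπ₀ i.1 i.2]
  · intro π _; group
  · intro π _; group

lemma card_mapsto (T U : Finset (Fin n)) :
    (univ.filter (fun π : Equiv.Perm (Fin n) => ∀ i ∈ T, π i ∈ U)).card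
      = (U.card).descFactorial T.card * Nat.factorial (n - T.card) := by
  classical
  rw [Finset.card_eq_sum_card_fiberwise
    (f := fun π : Equiv.Perm (Fin n) => (fun i : {i // i ∈ T} => π i.1))
    (t := univ.filter (fun g : {i // i ∈ T} → Fin n =>
      Function.Injective g ∧ ∀ i : {i // i ∈ T}, g i ∈ U))
    (by
      intro π hπ
      simp only [Finset.mem_coe, mem_filter, mem_univ, true_and] at hπ ⊢
      exact ⟨fun a b h => Subtype.ext (π.injective h), fun i => hπ i.1 i.2⟩)]
  have hfib : ∀ g ∈ univ.filter (fun g : {i // i ∈ T} → Fin n =>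
      Function.Injective g ∧ ∀ i : {i // i ∈ T}, g i ∈ U),
      ((univ.filter (fun π : Equiv.Perm (Fin n) => ∀ i ∈ T, π i ∈ U)).filter
        (fun π => (fun i : {i // i ∈ T} => π i.1) = g)).card = Nat.factorial (n - T.card) := by
    intro g hg
    simp only [mem_filter, mem_univ, true_and] at hg
    rw [← card_fiber T g hg.1]
    congr 1
    ext π
    simp only [mem_filter, mem_univ, true_and, and_iff_right_iff_imp]
    intro h i hi
    rw [show π i = g ⟨i, hi⟩ from congrFun h ⟨i, hi⟩]
    exact hg.2 _
  rw [Finset.sum_congr rfl hfib, Finset.sum_const, smul_eq_mul]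
  congr 1
  have : (univ.filter (fun g : {i // i ∈ T} → Fin n =>
      Function.Injective g ∧ ∀ i : {i // i ∈ T}, g i ∈ U)).card
      = Fintype.card {g : {i // i ∈ T} → Fin n //
        Function.Injective g ∧ ∀ i : {i // i ∈ T}, g i ∈ U} := (Fintype.card_subtype _).symm
  rw [this]
  have e : {g : {i // i ∈ T} → Fin n // Function.Injective g ∧ ∀ i : {i // i ∈ T}, g i ∈ U}
      ≃ ({i // i ∈ T} ↪ {u // u ∈ U}) :=
    { toFun := fun g => ⟨fun i => ⟨g.1 i, g.2.2 i⟩,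
        fun a b h => g.2.1 (by simpa [Subtype.ext_iff] using h)⟩
      invFun := fun f => ⟨fun i => (f i : Fin n),
        ⟨fun a b h => f.injective (Subtype.ext h), fun i => (f i).2⟩⟩
      left_inv := fun g => rfl
      right_inv := fun f => by ext i; rfl }
  rw [Fintype.card_congr e, Fintype.card_embedding_eq, Fintype.card_coe, Fintype.card_coe]

end SuperpositionKConn

namespace SuperpositionKConn
open Finset

lemma card_Efin {n s r x : ℕ} (hr : 1 ≤ r) (hsrn : s + r ≤ n) (hx1 : 1 ≤ x) (hxn : x ≤ n)
    (hn : 0 < n) :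
    (Efin n s r x).card
      = (n - s).descFactorial x * Nat.factorial (n - x)
        - ((n - s - r).descFactorial x * Nat.factorial (n - x)
            + r.descFactorial x * Nat.factorial (n - x)) := by
  classical
  have hsub2 : permG n x (U2 n s r) ⊆ permG n x (U1 n s) := by
    intro π hπ
    simp only [permG, mem_filter, mem_univ, true_and, U1, U2] at hπ ⊢
    intro i hi
    have := hπ i hi
    omega
  have hsub3 : permG n x (U3 n s r) ⊆ permG n x (U1 n s) := by
    intro π hπ
    simp only [permG, mem_filter, mem_univ, true_and, U1, U3] at hπ ⊢
    intro i hi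
    have := hπ i hi
    omega
  have hdisj : Disjoint (permG n x (U2 n s r)) (permG n x (U3 n s r)) := by
    rw [Finset.disjoint_left]
    intro π h2 h3
    simp only [permG, mem_filter, mem_univ, true_and, U2, U3] at h2 h3
    have hi : (⟨0, hn⟩ : Fin n) ∈ Tpos n x := by
      simp only [Tpos, mem_filter, mem_univ, true_and]; omega
    have h2' := h2 _ hi
    have h3' := h3 _ hi
    omega
  have hA : (permG n x (U1 n s)).card
      = ((U1 n s).card).descFactorial (Tpos n x).card * Nat.factorial (n - (Tpos n x).card) :=
    card_mapsto _ _
  have hB : (permG n x (U2 n s r)).card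
      = ((U2 n s r).card).descFactorial (Tpos n x).card * Nat.factorial (n - (Tpos n x).card) :=
    card_mapsto _ _
  have hC : (permG n x (U3 n s r)).card
      = ((U3 n s r).card).descFactorial (Tpos n x).card * Nat.factorial (n - (Tpos n x).card) :=
    card_mapsto _ _
  rw [Efin, card_sdiff_of_subset (Finset.union_subset hsub2 hsub3),
    Finset.card_union_of_disjoint hdisj, hA, hB, hC, card_Tpos hxn, card_U1, card_U2,
    card_U3 hsrn]

lemma slice_le {n s r x : ℕ} (q : ℝ) (hq0 : 0 ≤ q) (hq1 : q ≤ 1) (hxn : x ≤ n)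
    (π : Equiv.Perm (Fin n)) (hπ : π ∈ Efin n s r x) :
    (Measure.pi fun _ : Sym2 (Fin n) => unif01)
      {g : Sym2 (Fin n) → ℝ | ∀ u v : Fin n, (u : ℕ) ∈ Set.Ico s (s + r) →
        (v : ℕ) ∈ Set.Ico (s + r) n → ¬ bAdj x q (π, g) u v}
      ≤ ENNReal.ofReal ((1 - q) ^ (x - 1)) := by
  classical
  simp only [Efin, Finset.mem_sdiff, Finset.mem_union, not_or, permG, mem_filter, mem_univ, true_and] at hπ
  simp only [U1, U2, U3] at hπ
  obtain ⟨hG1, hn2, hn3⟩ := hπ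
  -- witness in [s, s+r)
  rw [not_forall] at hn2
  obtain ⟨i₀, hi₀⟩ := hn2
  rw [Classical.not_imp] at hi₀
  obtain ⟨hi₀T, hi₀U⟩ := hi₀
  have hi₀3 : s ≤ (π i₀ : ℕ) ∧ (π i₀ : ℕ) < s + r := by
    have := hG1 i₀ hi₀T
    simp only [mem_filter, mem_univ, true_and] at this hi₀U
    omega
  -- witness in [s+r, n)
  rw [not_forall] at hn3
  obtain ⟨j₀, hj₀⟩ := hn3
  rw [Classical.not_imp] at hj₀
  obtain ⟨hj₀T, hj₀U⟩ := hj₀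
  have hj₀2 : s + r ≤ (π j₀ : ℕ) := by
    have := hG1 j₀ hj₀T
    simp only [mem_filter, mem_univ, true_and] at this hj₀U
    omega
  have hij : i₀ ≠ j₀ := by
    intro h; rw [h] at hi₀3; omega
  -- the pair set
  set P : Finset (Sym2 (Fin n)) := ((Tpos n x).erase i₀).image
    (fun i => if (π i : ℕ) < s + r then s(π i, π j₀) else s(π i₀, π i)) with hP
  have hinj : Set.InjOn (fun i => if (π i : ℕ) < s + r then s(π i, π j₀) else s(π i₀, π i))
      ((Tpos n x).erase i₀) := by
    intro a ha b hb hab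
    have haa := Finset.mem_of_mem_erase ha
    have hba := Finset.mem_of_mem_erase hb
    have hane : a ≠ i₀ := Finset.ne_of_mem_erase ha
    have hbne : b ≠ i₀ := Finset.ne_of_mem_erase hb
    by_cases h1 : (π a : ℕ) < s + r <;> by_cases h2 : (π b : ℕ) < s + r <;>
      simp only [h1, h2, if_pos, if_neg, if_true, if_false, Sym2.eq, Sym2.rel_iff',
        Prod.mk.injEq, Prod.swap_prod_mk] at hab
    · rcases hab with ⟨hab, -⟩ | ⟨hab1, hab2⟩
      · exact π.injective hab
      · exfalso; have := congrArg (fun z : Fin n => (z : ℕ)) hab1; omega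
    · exfalso
      rcases hab with ⟨hab1, hab2⟩ | ⟨hab1, hab2⟩
      · exact hane (π.injective hab1)
      · have := congrArg (fun z : Fin n => (z : ℕ)) hab1; omega
    · exfalso
      rcases hab with ⟨hab1, hab2⟩ | ⟨hab1, hab2⟩
      · exact hbne (π.injective hab1).symm
      · have v1 := congrArg (fun z : Fin n => (z : ℕ)) hab1
        have h3 := hi₀3
        omega
    · rcases hab with ⟨-, hab⟩ | ⟨hab1, hab2⟩
      · exact π.injective hab
      · exfalso
        first
          | exact hane (π.injective hab2)
          | exact hane ((π.injective hab2).symm)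
          | exact hbne (π.injective hab1)
          | exact hbne ((π.injective hab1).symm)
          | exact hane (π.injective hab1)
          | exact hbne (π.injective hab2)
  have hcardP : P.card = x - 1 := by
    rw [hP, Finset.card_image_of_injOn hinj, Finset.card_erase_of_mem hi₀T, card_Tpos hxn]
  -- inclusion into a cylinder
  set t : Sym2 (Fin n) → Set ℝ := fun e => if e ∈ P then Set.Ioi q else Set.univ with ht
  have hincl : {g : Sym2 (Fin n) → ℝ | ∀ u v : Fin n, (u : ℕ) ∈ Set.Ico s (s + r) →
      (v : ℕ) ∈ Set.Ico (s + r) n → ¬ bAdj x q (π, g) u v} ⊆ Set.pi Set.univ t := by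
    intro g hg
    intro e _
    rw [ht]
    by_cases he : e ∈ P
    · simp only [if_pos he]
      rw [hP] at he
      obtain ⟨i, hi, hie⟩ := Finset.mem_image.mp he
      have hiT := Finset.mem_of_mem_erase hi
      have hiTx : (i : ℕ) < x := by
        have := hiT; simp only [Tpos, mem_filter, mem_univ, true_and] at this; exact this
      have hi1 : s ≤ (π i : ℕ) := by
        have := hG1 i hiT
        simp only [mem_filter, mem_univ, true_and] at this; exact this
      by_cases hc : (π i : ℕ) < s + r
      · rw [if_pos hc] at hie
        have happ := hg (π i) (π j₀) (Set.mem_Ico.mpr ⟨hi1, hc⟩)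
          (Set.mem_Ico.mpr ⟨hj₀2, (π j₀).2⟩)
        rw [bAdj] at happ
        push_neg at happ
        have h1 : π i ≠ π j₀ := by
          intro hh
          rw [hh] at hc; omega
        have h2 : ((π.symm (π i) : Fin n) : ℕ) < x := by
          rw [Equiv.symm_apply_apply]; exact hiTx
        have h3 : ((π.symm (π j₀) : Fin n) : ℕ) < x := by
          rw [Equiv.symm_apply_apply]
          have := hj₀T; simp only [Tpos, mem_filter, mem_univ, true_and] at this; exact this
        have := happ h1 h2 h3
        rw [← hie]
        simpa using this
      · rw [if_neg hc] at hie
        have happ := hg (π i₀) (π i) (Set.mem_Ico.mpr hi₀3)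
          (Set.mem_Ico.mpr ⟨not_lt.mp hc, (π i).2⟩)
        rw [bAdj] at happ
        push_neg at happ
        have h1 : π i₀ ≠ π i := by
          intro hh
          rw [← hh] at hc; omega
        have h2 : ((π.symm (π i₀) : Fin n) : ℕ) < x := by
          rw [Equiv.symm_apply_apply]
          have := hi₀T; simp only [Tpos, mem_filter, mem_univ, true_and] at this; exact this
        have h3 : ((π.symm (π i) : Fin n) : ℕ) < x := by
          rw [Equiv.symm_apply_apply]; exact hiTx
        have := happ h1 h2 h3
        rw [← hie]
        simpa using this
    · simp only [if_neg he, Set.mem_univ]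
  refine le_trans (measure_mono hincl) (le_of_eq ?_)
  rw [Measure.pi_pi]
  have hval : ∀ e : Sym2 (Fin n), unif01 (t e) = (if e ∈ P then ENNReal.ofReal (1 - q) else 1) := by
    intro e
    rw [ht]
    by_cases he : e ∈ P
    · simp only [if_pos he]; exact unif01_Ioi hq0 hq1
    · simp only [if_neg he]; exact measure_univ
  rw [Finset.prod_congr rfl (fun e _ => hval e), Finset.prod_ite_mem, Finset.univ_inter,
    Finset.prod_const, hcardP, ENNReal.ofReal_pow (by linarith)]

end SuperpositionKConn

namespace SuperpositionKConn

lemma qrs_le_aux {n s r x : ℕ} {q : ℝ} (hq0 : 0 ≤ q) (hq1 : q ≤ 1) (hxn : x ≤ n) :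
    qrs n r s x q ≤ 1 - ((Efin n s r x).card : ℝ) / (Nat.factorial n : ℝ)
      * (1 - (1 - q) ^ (x - 1)) := by
  classical
  set ν : Measure (Sym2 (Fin n) → ℝ) := Measure.pi fun _ : Sym2 (Fin n) => unif01 with hν
  set NE : Set (BernSpace n) := {ω : BernSpace n | ∀ u v : Fin n, (u : ℕ) ∈ Set.Ico s (s + r) →
      (v : ℕ) ∈ Set.Ico (s + r) n → ¬ bAdj x q ω u v} with hNE
  set E := Efin n s r x with hE
  have hsub : NE ⊆ (((↑E : Set (Equiv.Perm (Fin n)))ᶜ) ×ˢ (Set.univ : Set (Sym2 (Fin n) → ℝ)))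
      ∪ ⋃ π ∈ E, ({π} : Set (Equiv.Perm (Fin n))) ×ˢ
        {g : Sym2 (Fin n) → ℝ | ∀ u v : Fin n, (u : ℕ) ∈ Set.Ico s (s + r) →
          (v : ℕ) ∈ Set.Ico (s + r) n → ¬ bAdj x q (π, g) u v} := by
    intro ω hω
    by_cases hωE : ω.1 ∈ E
    · right
      refine Set.mem_iUnion₂.mpr ⟨ω.1, hωE, ?_⟩
      refine Set.mem_prod.mpr ⟨rfl, ?_⟩
      intro u v hu hv
      exact hω u v hu hv
    · left
      exact Set.mem_prod.mpr ⟨hωE, Set.mem_univ _⟩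
  have hmeas : bernMeasure n NE ≤ permMeasure n ((↑E : Set (Equiv.Perm (Fin n)))ᶜ)
      + (E.card : ENNReal) * (((Nat.factorial n : ENNReal))⁻¹
          * ENNReal.ofReal ((1 - q) ^ (x - 1))) := by
    refine le_trans (measure_mono hsub) (le_trans (measure_union_le _ _) ?_)
    gcongr
    · rw [bernMeasure, Measure.prod_prod, measure_univ, mul_one]
    · refine le_trans (measure_biUnion_finset_le _ _) ?_
      have hterm : ∀ π ∈ E, bernMeasure n (({π} : Set (Equiv.Perm (Fin n))) ×ˢ
          {g : Sym2 (Fin n) → ℝ | ∀ u v : Fin n, (u : ℕ) ∈ Set.Ico s (s + r) →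
            (v : ℕ) ∈ Set.Ico (s + r) n → ¬ bAdj x q (π, g) u v})
          ≤ ((Nat.factorial n : ENNReal))⁻¹ * ENNReal.ofReal ((1 - q) ^ (x - 1)) := by
        intro π hπ
        rw [bernMeasure, Measure.prod_prod]
        have h1 : permMeasure n ({π} : Set (Equiv.Perm (Fin n)))
            = ((Nat.factorial n : ENNReal))⁻¹ := by
          have := permMeasure_apply (n := n) {π}
          simpa using this
        rw [h1]
        exact mul_le_mul_right (slice_le q hq0 hq1 hxn π hπ) _
      refine le_trans (Finset.sum_le_sum hterm) ?_
      rw [Finset.sum_const, nsmul_eq_mul]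
  have hcompl : permMeasure n ((↑E : Set (Equiv.Perm (Fin n)))ᶜ)
      = 1 - (E.card : ENNReal) * ((Nat.factorial n : ENNReal))⁻¹ := by
    rw [measure_compl (permMeasurableSet _) (measure_ne_top _ _), measure_univ,
      permMeasure_apply]
  rw [hcompl] at hmeas
  -- pass to real numbers
  have hfact_pos : (0 : ℝ) < (Nat.factorial n : ℝ) := by
    exact_mod_cast Nat.factorial_pos n
  have hple : (E.card : ENNReal) * ((Nat.factorial n : ENNReal))⁻¹ ≤ 1 := by
    rw [← permMeasure_apply]; exact prob_le_one
  have hfin1 : (E.card : ENNReal) * ((Nat.factorial n : ENNReal))⁻¹ ≠ ⊤ :=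
    lt_of_le_of_lt hple (by norm_num) |>.ne
  have hq1' : (0:ℝ) ≤ (1 - q) ^ (x - 1) := pow_nonneg (by linarith) _
  have htoReal : ((E.card : ENNReal) * ((Nat.factorial n : ENNReal))⁻¹).toReal
      = (E.card : ℝ) / (Nat.factorial n : ℝ) := by
    rw [ENNReal.toReal_mul, ENNReal.toReal_inv, ENNReal.toReal_natCast, ENNReal.toReal_natCast,
      div_eq_mul_inv]
  have hrhs_ne : (1 - (E.card : ENNReal) * ((Nat.factorial n : ENNReal))⁻¹
      + (E.card : ENNReal) * (((Nat.factorial n : ENNReal))⁻¹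
        * ENNReal.ofReal ((1 - q) ^ (x - 1)))) ≠ ⊤ := by
    apply ENNReal.add_ne_top.mpr
    constructor
    · exact (lt_of_le_of_lt tsub_le_self (by norm_num)).ne
    · rw [← mul_assoc]
      exact ENNReal.mul_ne_top hfin1 ENNReal.ofReal_ne_top
  have := ENNReal.toReal_mono hrhs_ne hmeas
  rw [qrs]
  refine le_trans this (le_of_eq ?_)
  rw [ENNReal.toReal_add (lt_of_le_of_lt tsub_le_self (by norm_num)).ne
      (by rw [← mul_assoc]; exact ENNReal.mul_ne_top hfin1 ENNReal.ofReal_ne_top),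
    ENNReal.toReal_sub_of_le hple (by norm_num), ENNReal.toReal_one, htoReal,
    ← mul_assoc, ENNReal.toReal_mul, ENNReal.toReal_mul, ENNReal.toReal_inv,
    ENNReal.toReal_natCast, ENNReal.toReal_natCast, ENNReal.toReal_ofReal hq1']
  ring


lemma df_succ_le (M k : ℕ) :
    (M + 1).descFactorial (k + 1) ≤ M.descFactorial (k + 1) + (k + 1) * M.descFactorial k := by
  rw [Nat.succ_descFactorial_succ, Nat.descFactorial_succ]
  by_cases h : k ≤ M
  · rw [← add_mul]
    apply Nat.mul_le_mul_right
    omega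
  · rw [Nat.descFactorial_of_lt (by omega)]
    simp

lemma df_sub_le (K m : ℕ) {x : ℕ} (hx : 1 ≤ x) :
    K.descFactorial x ≤ (K - m).descFactorial x + m * x * (K - 1).descFactorial (x - 1) := by
  induction m with
  | zero => simp
  | succ m ih =>
    rcases Nat.eq_zero_or_pos (K - m) with h0 | hpos
    · have h1 : K - (m + 1) = 0 := by omega
      have hmul : m * x * (K - 1).descFactorial (x - 1)
          ≤ (m + 1) * x * (K - 1).descFactorial (x - 1) :=
        Nat.mul_le_mul (Nat.mul_le_mul (by omega) le_rfl) le_rfl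
      calc K.descFactorial x
          ≤ (K - m).descFactorial x + m * x * (K - 1).descFactorial (x - 1) := ih
        _ = (K - (m + 1)).descFactorial x + m * x * (K - 1).descFactorial (x - 1) := by
            rw [h0, h1]
        _ ≤ (K - (m + 1)).descFactorial x + (m + 1) * x * (K - 1).descFactorial (x - 1) :=
            Nat.add_le_add_left hmul _
    · obtain ⟨M, hM⟩ : ∃ M, K - m = M + 1 := ⟨K - m - 1, by omega⟩
      have hKm1 : K - (m + 1) = M := by omega
      have hstep : (K - m).descFactorial x
          ≤ (K - (m + 1)).descFactorial x + x * (K - 1).descFactorial (x - 1) := by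
        rw [hM, hKm1]
        obtain ⟨k, hk⟩ : ∃ k, x = k + 1 := ⟨x - 1, by omega⟩
        subst hk
        refine le_trans (df_succ_le M k) ?_
        simp only [Nat.add_sub_cancel]
        exact Nat.add_le_add_left
          (Nat.mul_le_mul_left _ (Nat.descFactorial_le _ (by omega))) _
      calc K.descFactorial x ≤ (K - m).descFactorial x + m * x * (K - 1).descFactorial (x - 1) :=
            ih
        _ ≤ (K - (m + 1)).descFactorial x + x * (K - 1).descFactorial (x - 1)
              + m * x * (K - 1).descFactorial (x - 1) := by
            exact Nat.add_le_add_right hstep _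
        _ = (K - (m + 1)).descFactorial x + (m + 1) * x * (K - 1).descFactorial (x - 1) := by
            ring

lemma analA1 {n s r x : ℕ} (hr : 1 ≤ r) (hsrn : s + r ≤ n) :
    ((n - s - r).descFactorial x : ℝ)
      ≤ Real.exp (-((r : ℝ) * x / ((n : ℝ) - s))) * ((n - s).descFactorial x : ℝ) := by
  have hNS : ((n : ℝ) - s) = ((n - s : ℕ) : ℝ) := by
    rw [Nat.cast_sub (by omega)]
  have hNSpos : (0 : ℝ) < (n : ℝ) - s := by
    rw [hNS]; exact_mod_cast (by omega : 0 < n - s)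
  rw [Nat.descFactorial_eq_prod_range, Nat.descFactorial_eq_prod_range, Nat.cast_prod,
    Nat.cast_prod]
  have hexp : Real.exp (-((r : ℝ) * x / ((n : ℝ) - s)))
      = ∏ _i ∈ Finset.range x, Real.exp (-((r : ℝ) / ((n : ℝ) - s))) := by
    rw [Finset.prod_const, Finset.card_range, ← Real.exp_nat_mul]
    congr 1
    ring
  rw [hexp, ← Finset.prod_mul_distrib]
  apply Finset.prod_le_prod
  · intro i _; positivity
  · intro i _
    by_cases h : n - s - r ≤ i
    · rw [Nat.sub_eq_zero_of_le h]
      simp only [Nat.cast_zero]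
      positivity
    · push_neg at h
      set M : ℕ := n - s - i with hMdef
      have h1 : n - s - r - i = M - r := by omega
      have h2 : r ≤ M := by omega
      have h3 : (M : ℝ) ≤ (n : ℝ) - s := by
        rw [hNS]; exact_mod_cast (by omega : M ≤ n - s)
      have hcast1 : ((n - s - r - i : ℕ) : ℝ) = (M : ℝ) - r := by
        rw [h1, Nat.cast_sub h2]
      have hcast2 : ((n - s - i : ℕ) : ℝ) = (M : ℝ) := by rw [hMdef]
      rw [hcast1, hcast2]
      have hE : 1 - (r : ℝ) / ((n : ℝ) - s) ≤ Real.exp (-((r : ℝ) / ((n : ℝ) - s))) := by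
        have := Real.add_one_le_exp (-((r : ℝ) / ((n : ℝ) - s)))
        linarith
      have ht : ((r : ℝ) / ((n : ℝ) - s)) * ((n : ℝ) - s) = r := by
        field_simp
      have hM0 : (0 : ℝ) ≤ M := Nat.cast_nonneg M
      nlinarith [mul_le_mul_of_nonneg_right hE hM0,
        mul_le_mul_of_nonneg_left h3 (by positivity : (0:ℝ) ≤ (r : ℝ) / ((n : ℝ) - s))]

lemma analA2 {n s r x : ℕ} (hr : 1 ≤ r) (hrn : 2 * r + s ≤ n) (hx2 : 2 ≤ x) :
    (r.descFactorial x : ℝ)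
      ≤ ((r : ℝ) ^ 2 / ((n : ℝ) - s - r) ^ 2) * (n.descFactorial x : ℝ) := by
  have h2R : 2 * (r : ℝ) + s ≤ n := by exact_mod_cast hrn
  have hr' : (1 : ℝ) ≤ r := by exact_mod_cast hr
  have hS0' : (0 : ℝ) ≤ s := Nat.cast_nonneg s
  have hD : (0 : ℝ) < (n : ℝ) - s - r := by linarith
  have hRD : (r : ℝ) ≤ (n : ℝ) - s - r := by linarith
  rw [Nat.descFactorial_eq_prod_range, Nat.descFactorial_eq_prod_range, Nat.cast_prod,
    Nat.cast_prod]
  have key : ∏ i ∈ Finset.range x, ((r - i : ℕ) : ℝ)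
      ≤ ∏ i ∈ Finset.range x, ((r : ℝ) / ((n : ℝ) - s - r)) * ((n - i : ℕ) : ℝ) := by
    apply Finset.prod_le_prod
    · intro i _; positivity
    · intro i hi
      rw [Finset.mem_range] at hi
      by_cases h : r ≤ i
      · rw [Nat.sub_eq_zero_of_le h]
        simp only [Nat.cast_zero]
        positivity
      · push_neg at h
        have hin : i < n := by omega
        have hcast1 : ((r - i : ℕ) : ℝ) = (r : ℝ) - i := by
          rw [Nat.cast_sub (by omega)]
        have hcast2 : ((n - i : ℕ) : ℝ) = (n : ℝ) - i := by
          rw [Nat.cast_sub (by omega)]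
        rw [hcast1, hcast2, div_mul_eq_mul_div, le_div_iff₀ hD]
        have hIr : (i : ℝ) + 1 ≤ r := by exact_mod_cast h
        have hI0 : (0 : ℝ) ≤ i := Nat.cast_nonneg i
        nlinarith [mul_nonneg hI0 (by linarith : (0:ℝ) ≤ (n:ℝ) - 2*r),
          mul_nonneg hS0' (by linarith : (0:ℝ) ≤ (r:ℝ) - i), sq_nonneg (r : ℝ)]
  rw [Finset.prod_mul_distrib, Finset.prod_const, Finset.card_range] at key
  refine le_trans key ?_
  have hratio : ((r : ℝ) / ((n : ℝ) - s - r)) ^ x ≤ ((r : ℝ) / ((n : ℝ) - s - r)) ^ 2 := by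
    apply pow_le_pow_of_le_one (by positivity) ?_ hx2
    rw [div_le_one hD]
    exact hRD
  have hprodnn : (0 : ℝ) ≤ ∏ i ∈ Finset.range x, ((n - i : ℕ) : ℝ) := by
    apply Finset.prod_nonneg; intro i _; positivity
  calc ((r : ℝ) / ((n : ℝ) - s - r)) ^ x * ∏ i ∈ Finset.range x, ((n - i : ℕ) : ℝ)
      ≤ ((r : ℝ) / ((n : ℝ) - s - r)) ^ 2 * ∏ i ∈ Finset.range x, ((n - i : ℕ) : ℝ) :=
        mul_le_mul_of_nonneg_right hratio hprodnn
    _ = (r : ℝ) ^ 2 / ((n : ℝ) - s - r) ^ 2 * ∏ i ∈ Finset.range x, ((n - i : ℕ) : ℝ) := by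
        rw [div_pow]

lemma analA3 {n s x : ℕ} (hsn : s ≤ n) (hx1 : 1 ≤ x) (hn : 1 ≤ n) :
    (1 - (s : ℝ) * x / n) * (n.descFactorial x : ℝ) ≤ ((n - s).descFactorial x : ℝ) := by
  have hnat := df_sub_le n s hx1
  have hid : n.descFactorial x = n * (n - 1).descFactorial (x - 1) := by
    conv_lhs => rw [show n = (n - 1) + 1 by omega, show x = (x - 1) + 1 by omega]
    rw [Nat.succ_descFactorial_succ, show (n - 1) + 1 = n by omega]
  have hcast : (n.descFactorial x : ℝ) ≤ ((n - s).descFactorial x : ℝ)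
      + (s : ℝ) * x * ((n - 1).descFactorial (x - 1) : ℝ) := by
    exact_mod_cast hnat
  have hdf : (s : ℝ) * x * ((n - 1).descFactorial (x - 1) : ℝ)
      = (s : ℝ) * x / n * (n.descFactorial x : ℝ) := by
    rw [hid]
    push_cast
    field_simp
  rw [hdf] at hcast
  linarith

lemma anal_main {n s r x : ℕ} (hr : 1 ≤ r) (hrn : 2 * r + s ≤ n) (hx2 : 2 ≤ x) (hxn : x ≤ n) :
    (1 - Real.exp (-((r : ℝ) * x / ((n : ℝ) - s))) - (r : ℝ) ^ 2 / ((n : ℝ) - s - r) ^ 2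
        - (s : ℝ) * r * (x : ℝ) ^ 2 / ((n : ℝ) * ((n : ℝ) - s))) * (n.descFactorial x : ℝ)
      ≤ ((n - s).descFactorial x : ℝ) - ((n - s - r).descFactorial x : ℝ)
        - (r.descFactorial x : ℝ) := by
  have hsrn : s + r ≤ n := by omega
  have hn1 : 1 ≤ n := by omega
  set E1 := Real.exp (-((r : ℝ) * x / ((n : ℝ) - s))) with hE1def
  set E2 := (r : ℝ) ^ 2 / ((n : ℝ) - s - r) ^ 2 with hE2def
  set E3 := (s : ℝ) * r * (x : ℝ) ^ 2 / ((n : ℝ) * ((n : ℝ) - s)) with hE3def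
  set Dn := (n.descFactorial x : ℝ) with hDndef
  set D1 := ((n - s).descFactorial x : ℝ) with hD1def
  set D2 := ((n - s - r).descFactorial x : ℝ) with hD2def
  set D3 := (r.descFactorial x : ℝ) with hD3def
  have hNSpos : (0 : ℝ) < (n : ℝ) - s := by
    have : ((s : ℝ)) + 1 ≤ n := by exact_mod_cast (by omega : s + 1 ≤ n)
    linarith
  have hnpos : (0 : ℝ) < n := by exact_mod_cast (by omega : 0 < n)
  have h1 : D2 ≤ E1 * D1 := analA1 hr hsrn
  have h2 : D3 ≤ E2 * Dn := analA2 hr hrn hx2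
  have h3 : (1 - (s : ℝ) * x / n) * Dn ≤ D1 := analA3 (by omega) (by omega) hn1
  have hq : (0 : ℝ) ≤ (r : ℝ) * x / ((n : ℝ) - s) := by positivity
  have h4 : 0 ≤ 1 - E1 := by
    rw [hE1def]
    have : Real.exp (-((r : ℝ) * x / ((n : ℝ) - s))) ≤ 1 := by
      rw [Real.exp_le_one_iff]; linarith
    linarith
  have h5 : 1 - E1 ≤ (r : ℝ) * x / ((n : ℝ) - s) := by
    rw [hE1def]
    have := Real.add_one_le_exp (-((r : ℝ) * x / ((n : ℝ) - s)))
    linarith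
  have h6 : (0 : ℝ) ≤ (s : ℝ) * x / n := by positivity
  have h7 : (0 : ℝ) ≤ Dn := by rw [hDndef]; positivity
  have h8 : ((r : ℝ) * x / ((n : ℝ) - s)) * ((s : ℝ) * x / n) = E3 := by
    rw [hE3def, div_mul_div_comm]
    ring_nf
  have key1 : (1 - E1) * ((1 - (s : ℝ) * x / n) * Dn) ≤ (1 - E1) * D1 :=
    mul_le_mul_of_nonneg_left h3 h4
  have key2 : ((1 - E1) * ((s : ℝ) * x / n)) * Dn
      ≤ (((r : ℝ) * x / ((n : ℝ) - s)) * ((s : ℝ) * x / n)) * Dn :=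
    mul_le_mul_of_nonneg_right (mul_le_mul_of_nonneg_right h5 h6) h7
  rw [h8] at key2
  nlinarith [key1, key2, h1, h2]



/-- Lemma 3, inequality (10). -/
theorem qrs_upper_bound_two
    (n s r x : ℕ) (q : ℝ)
    (hr : 1 ≤ r) (hrn : 2 * r + s ≤ n)
    (hx2 : 2 ≤ x) (hxn : x ≤ n)
    (hq0 : 0 ≤ q) (hq1 : q ≤ 1) :
    qrs n r s x q ≤
      1 - (1 - Real.exp (-((r : ℝ) * x / ((n : ℝ) - s)))
            - (r : ℝ) ^ 2 / ((n : ℝ) - s - r) ^ 2) * hfun x q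
        + (s : ℝ) * r * (x : ℝ) ^ 2 / ((n : ℝ) * ((n : ℝ) - s)) * hfun x q := by

  have hsrn : s + r ≤ n := by omega
  have hx1 : 1 ≤ x := by omega
  have step1 := qrs_le_aux (n := n) (s := s) (r := r) (x := x) hq0 hq1 hxn
  set F := Nat.factorial (n - x) with hF
  set E1 := Real.exp (-((r : ℝ) * x / ((n : ℝ) - s))) with hE1def
  set E2 := (r : ℝ) ^ 2 / ((n : ℝ) - s - r) ^ 2 with hE2def
  set E3 := (s : ℝ) * r * (x : ℝ) ^ 2 / ((n : ℝ) * ((n : ℝ) - s)) with hE3def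
  set Dn := (n.descFactorial x : ℝ) with hDndef
  set D1 := ((n - s).descFactorial x : ℝ) with hD1def
  set D2 := ((n - s - r).descFactorial x : ℝ) with hD2def
  set D3 := (r.descFactorial x : ℝ) with hD3def
  have hcardE := card_Efin (n := n) (s := s) (r := r) (x := x) hr hsrn hx1 hxn (by omega)
  have hEreal : D1 * F - D2 * F - D3 * F ≤ ((Efin n s r x).card : ℝ) := by
    rw [hcardE]
    have hc : ∀ a b : ℕ, ((a : ℝ) - b) ≤ ((a - b : ℕ) : ℝ) := by
      intro a b
      rcases le_total b a with h | h
      · rw [Nat.cast_sub h]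
      · rw [Nat.sub_eq_zero_of_le h, Nat.cast_zero, sub_nonpos]
        exact_mod_cast h
    have hc := hc ((n - s).descFactorial x * F)
      ((n - s - r).descFactorial x * F + r.descFactorial x * F)
    refine le_trans (le_of_eq ?_) hc
    push_cast
    ring
  have hnfact : ((n.factorial : ℝ)) = (F : ℝ) * Dn := by
    rw [hDndef, hF]
    exact_mod_cast (Nat.factorial_mul_descFactorial hxn).symm
  have hDnpos : (0 : ℝ) < Dn := by
    rw [hDndef]
    have : 0 < n.descFactorial x :=
      Nat.pos_of_ne_zero fun hh => absurd (Nat.descFactorial_eq_zero_iff_lt.mp hh) (by omega)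
    exact_mod_cast this
  have hFpos : (0 : ℝ) < (F : ℝ) := by exact_mod_cast Nat.factorial_pos (n - x)
  have hnfactpos : (0 : ℝ) < (n.factorial : ℝ) := by exact_mod_cast Nat.factorial_pos n
  have h9 : (1 - E1 - E2 - E3) * Dn ≤ D1 - D2 - D3 := anal_main hr hrn hx2 hxn
  have hpE : 1 - E1 - E2 - E3 ≤ ((Efin n s r x).card : ℝ) / (n.factorial : ℝ) := by
    rw [le_div_iff₀ hnfactpos, hnfact, ← mul_assoc]
    calc (1 - E1 - E2 - E3) * (F : ℝ)* Dn = ((1 - E1 - E2 - E3) * Dn) * F := by ring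
      _ ≤ (D1 - D2 - D3) * F := mul_le_mul_of_nonneg_right h9 hFpos.le
      _ = D1 * F - D2 * F - D3 * F := by ring
      _ ≤ ((Efin n s r x).card : ℝ) := hEreal
  have hh0 : 0 ≤ 1 - (1 - q) ^ (x - 1) := by
    have : (1 - q) ^ (x - 1) ≤ 1 := pow_le_one₀ (by linarith) (by linarith)
    linarith
  have hfinal : qrs n r s x q ≤ 1 - (1 - E1 - E2 - E3) * (1 - (1 - q) ^ (x - 1)) := by
    refine le_trans step1 ?_
    have := mul_le_mul_of_nonneg_right hpE hh0
    linarith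
  refine le_trans hfinal (le_of_eq ?_)
  rw [hfun]
  ring

end SuperpositionKConn
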